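/- arXiv:1902.04472 — 4 statements merged into one kernel-verified Lean document; each statement's English description precedes it below -/
import Mathlib

section
/- Let ν > 0 be such that √ν is irrational and √ν > 1. For each positive integer k, let i_k denote the nearest integer to √ν·k, i.e. the unique positive integer satisfying |√ν·k − i_k| < 1/2. Then the set of positive integers not of the form i_k for some positive integer k, i.e. ℕ* \ {i_k : k ≥ 1}, is infinite. -/
/-! If every positive integer beyond `N` were a value `f k`, then the `M - N` integers in
`(N, M]` would all be values of `f` at arguments `k` with `c k < M + b`. For `c > 1` and `M`
large there are fewer than `M - N` such arguments. -/

lemma exists_nat_add_lt_mul_sub {c : ℝ} (hc : 1 < c) (b : ℝ) (N : ℕ) :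
    ∃ M : ℕ, N < M ∧ (M : ℝ) + b < c * ((M : ℝ) - N) := by
  obtain ⟨M, hM⟩ := exists_nat_gt (max (N : ℝ) ((c * N + b) / (c - 1)))
  rw [max_lt_iff, div_lt_iff₀ (by linarith)] at hM
  exact ⟨M, by exact_mod_cast hM.1, by linarith [hM.2]⟩

theorem infinite_setOf_forall_ne_of_mul_lt_add {f : ℕ → ℕ} {c b : ℝ} (hc : 1 < c)
    (hf : ∀ k : ℕ, 1 ≤ k → c * k < f k + b) :
    {n : ℕ | 0 < n ∧ ∀ k : ℕ, 1 ≤ k → f k ≠ n}.Infinite := by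
  intro hfin
  obtain ⟨N, hN⟩ := hfin.bddAbove
  obtain ⟨M, hNM, hM⟩ := exists_nat_add_lt_mul_sub hc b N
  have hsub : Finset.Ioc N M ⊆ (Finset.Ico 1 (M - N)).image f := by
    intro n hn
    rw [Finset.mem_Ioc] at hn
    obtain ⟨k, hk, rfl⟩ : ∃ k, 1 ≤ k ∧ f k = n := by
      by_contra! hmiss
      exact absurd (hN ⟨by omega, hmiss⟩) (by omega)
    have hfk : (f k : ℝ) ≤ M := by exact_mod_cast hn.2
    have hkM : (k : ℝ) < (M : ℝ) - N :=
      lt_of_mul_lt_mul_left (a := c) (by linarith [hf k hk]) (by linarith)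
    rw [← Nat.cast_sub hNM.le] at hkM
    exact Finset.mem_image_of_mem f (Finset.mem_Ico.mpr ⟨hk, by exact_mod_cast hkM⟩)
  have hcard := (Finset.card_le_card hsub).trans Finset.card_image_le
  rw [Nat.card_Ioc, Nat.card_Ico] at hcard
  omega

theorem stmt_2_general (ν : ℝ)
    (hgt : 1 < Real.sqrt ν) (i : ℕ → ℕ)
    (hi : ∀ k : ℕ, 1 ≤ k → 0 < i k ∧ |Real.sqrt ν * (k : ℝ) - (i k : ℝ)| < 1 / 2) :
    {n : ℕ | 0 < n ∧ ∀ k : ℕ, 1 ≤ k → i k ≠ n}.Infinite :=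
  infinite_setOf_forall_ne_of_mul_lt_add hgt fun k hk => by
    linarith [(abs_lt.mp (hi k hk).2).2]

/-- If `√ν` is irrational with `√ν > 1` and, for each positive integer `k`,
`i k` is the (unique) positive integer with `|√ν·k - i k| < 1/2`, then the set of
positive integers not of the form `i k` for some positive integer `k` is infinite. -/
theorem stmt_2 (ν : ℝ) (hν : 0 < ν) (hirr : Irrational (Real.sqrt ν))
    (hgt : 1 < Real.sqrt ν) (i : ℕ → ℕ)
    (hi : ∀ k : ℕ, 1 ≤ k → 0 < i k ∧ |Real.sqrt ν * (k : ℝ) - (i k : ℝ)| < 1 / 2) :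
    {n : ℕ | 0 < n ∧ ∀ k : ℕ, 1 ≤ k → i k ≠ n}.Infinite :=
  stmt_2_general ν hgt i hi
end

section
/- Let ν > 0 be such that √ν is irrational and 1 < √ν < 2, and for each positive integer m let i_m denote the nearest integer to √ν·m (the unique positive integer with |√ν·m − i_m| < 1/2). Then for every positive integer k and every positive integer n satisfying (2k+1)/(2(√ν−1)) − 1 < n < (2k+1)/(2(√ν−1)), one has i_n = n + k and i_{n+1} − i_n > 1. -/
/-!
Put `s = √ν`. Clearing the positive denominator `2 (s - 1)`, the two bounds on `n` say exactly
`s n < n + k + 1/2` and `(n + 1) + k + 1/2 < s (n + 1)`; the second, together with `s < 2`, also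
gives `n + k - 1/2 < s n`. Hence `n + k` is the integer nearest to `s n`, while `s (n + 1)` lies
beyond `n + k + 3/2`, so its nearest integer is at least `n + k + 2`.
-/

lemma lt_div_two_mul_sub_one_iff {s x y : ℝ} (hs : 1 < s) :
    x < y / (2 * (s - 1)) ↔ s * x < x + y / 2 := by
  rw [lt_div_iff₀ (by linarith)]
  constructor <;> intro h <;> linarith

lemma div_two_mul_sub_one_lt_iff {s x y : ℝ} (hs : 1 < s) :
    y / (2 * (s - 1)) < x ↔ x + y / 2 < s * x := by
  rw [div_lt_iff₀ (by linarith)]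
  constructor <;> intro h <;> linarith

lemma Nat.eq_of_abs_sub_lt_half {x : ℝ} {a b : ℕ} (ha : |x - a| < 1 / 2)
    (hb : |x - b| < 1 / 2) : a = b := by
  rw [abs_lt] at ha hb
  have hab : (a : ℝ) < b + 1 := by linarith
  have hba : (b : ℝ) < a + 1 := by linarith
  exact_mod_cast le_antisymm (Nat.lt_add_one_iff.1 (by exact_mod_cast hab))
    (Nat.lt_add_one_iff.1 (by exact_mod_cast hba))

lemma Nat.lt_of_add_half_lt_of_abs_sub_lt_half {x : ℝ} {a m : ℕ} (hm : m + 1 / 2 < x)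
    (ha : |x - a| < 1 / 2) : m < a := by
  have : (m : ℝ) < a := by linarith [(abs_lt.1 ha).2]
  exact_mod_cast this

theorem stmt_3_general (ν : ℝ) (h1 : 1 < Real.sqrt ν) (h2 : Real.sqrt ν < 2) (i : ℕ → ℕ)
    (hi : ∀ m : ℕ, 1 ≤ m → 0 < i m ∧ |Real.sqrt ν * (m : ℝ) - (i m : ℝ)| < 1 / 2)
    (k n : ℕ) (hn : 1 ≤ n)
    (hlow : (2 * (k : ℝ) + 1) / (2 * (Real.sqrt ν - 1)) - 1 < (n : ℝ))
    (hhigh : (n : ℝ) < (2 * (k : ℝ) + 1) / (2 * (Real.sqrt ν - 1))) :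
    i n = n + k ∧ 1 < (i (n + 1) : ℤ) - (i n : ℤ) := by
  set s := Real.sqrt ν
  have hsn_lt : s * n < n + k + 1 / 2 := by
    linarith [(lt_div_two_mul_sub_one_iff h1).1 hhigh]
  have hsn_succ_gt : (n + 1 : ℝ) + k + 1 / 2 < s * (n + 1) := by
    linarith [(div_two_mul_sub_one_lt_iff h1).1 (sub_lt_iff_lt_add.1 hlow)]
  have hin : i n = n + k := by
    refine Nat.eq_of_abs_sub_lt_half (hi n hn).2 (abs_lt.2 ⟨?_, ?_⟩) <;> push_cast <;>
      linarith [mul_add s n 1]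
  have hin_succ : n + k + 1 < i (n + 1) := by
    refine Nat.lt_of_add_half_lt_of_abs_sub_lt_half ?_ (hi (n + 1) (by omega)).2
    push_cast
    linarith
  exact ⟨hin, by omega⟩

/-- If `√ν` is irrational with `1 < √ν < 2`, `i m` is the nearest integer to
`√ν·m`, and `n` is a positive integer with `(2k+1)/(2(√ν-1)) - 1 < n < (2k+1)/(2(√ν-1))`
for a positive integer `k`, then `i n = n + k` and `i (n+1) - i n > 1`. -/
theorem stmt_3 (ν : ℝ) (hν : 0 < ν) (hirr : Irrational (Real.sqrt ν))
    (h1 : 1 < Real.sqrt ν) (h2 : Real.sqrt ν < 2) (i : ℕ → ℕ)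
    (hi : ∀ m : ℕ, 1 ≤ m → 0 < i m ∧ |Real.sqrt ν * (m : ℝ) - (i m : ℝ)| < 1 / 2)
    (k n : ℕ) (hk : 1 ≤ k) (hn : 1 ≤ n)
    (hlow : (2 * (k : ℝ) + 1) / (2 * (Real.sqrt ν - 1)) - 1 < (n : ℝ))
    (hhigh : (n : ℝ) < (2 * (k : ℝ) + 1) / (2 * (Real.sqrt ν - 1))) :
    i n = n + k ∧ 1 < (i (n + 1) : ℤ) - (i n : ℤ) :=
  stmt_3_general ν h1 h2 i hi k n hn hlow hhigh
end

section
/- Let i₀ and j₀ be coprime positive integers with i₀ > 1, set ν = i₀²/j₀², and let q ∈ L^∞(0,π). For each positive integer k not divisible by i₀, define I(k²) = ∫₀^π q(s)·φ_k(s)·√(π/2)·sin((k/√ν)·(π − s)) ds and define the function ψ̃'_k : [0,π] → ℝ by ψ̃'_k(x) = −(I(k²)/(ν·√(π/2)·sin(k·π/√ν)))·cos(k·x/√ν) + (1/ν)·∫₀ˣ cos((k/√ν)·(x − ξ))·q(ξ)·φ_k(ξ) dξ. Then there exists a constant C > 0 such that for every positive integer k not divisible by i₀ and every x ∈ [0,π],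 |ψ̃'_k(x)| ≤ C. -/
open MeasureTheory

/-- `phi n x = √(2/π)·sin(n x)`, the normalized Dirichlet eigenfunctions on `(0,π)`. -/
noncomputable def phi (n : ℕ) (x : ℝ) : ℝ := Real.sqrt (2 / Real.pi) * Real.sin ((n : ℝ) * x)

/-- `I(k²) = ∫₀^π q(s)·φ_k(s)·√(π/2)·sin((k/√ν)(π-s)) ds`. -/
noncomputable def Ival (ν : ℝ) (q : ℝ → ℝ) (k : ℕ) : ℝ :=
  ∫ s in (0 : ℝ)..Real.pi,
    q s * phi k s * Real.sqrt (Real.pi / 2) *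
      Real.sin (((k : ℝ) / Real.sqrt ν) * (Real.pi - s))

/-- `ψ̃'_k(x) = -(I(k²)/(ν √(π/2) sin(kπ/√ν)))·cos(kx/√ν) + (1/ν)∫₀ˣ cos((k/√ν)(x-ξ)) q(ξ) φ_k(ξ) dξ`. -/
noncomputable def psiTilde' (ν : ℝ) (q : ℝ → ℝ) (k : ℕ) (x : ℝ) : ℝ :=
  -(Ival ν q k / (ν * Real.sqrt (Real.pi / 2) * Real.sin ((k : ℝ) * Real.pi / Real.sqrt ν))) *
      Real.cos ((k : ℝ) * x / Real.sqrt ν) +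
    (1 / ν) * ∫ ξ in (0 : ℝ)..x, Real.cos (((k : ℝ) / Real.sqrt ν) * (x - ξ)) * q ξ * phi k ξ

/-- the functions `ψ̃'_k` are uniformly bounded on `[0,π]`, over all
positive integers `k` not divisible by `i₀`. -/
theorem stmt_12 (i0 j0 : ℕ) (hi0 : 1 < i0) (hj0 : 0 < j0) (hcop : Nat.Coprime i0 j0)
    (ν : ℝ) (hν : ν = (i0 : ℝ) ^ 2 / (j0 : ℝ) ^ 2)
    (q : ℝ → ℝ) (hq : MemLp q ⊤ (volume.restrict (Set.Ioo 0 Real.pi))) :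
    ∃ C : ℝ, 0 < C ∧ ∀ k : ℕ, 0 < k → ¬ i0 ∣ k →
      ∀ x ∈ Set.Icc (0 : ℝ) Real.pi, |psiTilde' ν q k x| ≤ C := by
  have hπ := Real.pi_pos
  have hi0R : (0:ℝ) < (i0:ℕ) := by exact_mod_cast Nat.lt_of_lt_of_le Nat.zero_lt_one hi0.le
  have hj0R : (0:ℝ) < (j0:ℕ) := by exact_mod_cast hj0
  have hνpos : 0 < ν := by rw [hν]; positivity
  have hsν : Real.sqrt ν = (i0:ℝ)/(j0:ℝ) := by
    rw [hν, ← div_pow, Real.sqrt_sq (by positivity)]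
  -- essential sup bound
  set M := (eLpNorm q ⊤ (volume.restrict (Set.Ioo 0 Real.pi))).toReal with hMdef
  have hM0 : 0 ≤ M := ENNReal.toReal_nonneg
  have hqae : ∀ᵐ s ∂(volume.restrict (Set.Ioc 0 Real.pi)), ‖q s‖ ≤ M := by
    rw [← Measure.restrict_congr_set MeasureTheory.Ioo_ae_eq_Ioc]
    have hfin : eLpNormEssSup q (volume.restrict (Set.Ioo 0 Real.pi)) ≠ ⊤ := by
      have := hq.2; rwa [eLpNorm_exponent_top, lt_top_iff_ne_top] at this
    filter_upwards [ae_le_eLpNormEssSup (f := q) (μ := volume.restrict (Set.Ioo 0 Real.pi))]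
      with s hs
    have : ((‖q s‖₊ : ENNReal)).toReal ≤ M := by
      rw [hMdef, eLpNorm_exponent_top]
      exact ENNReal.toReal_mono hfin hs
    simpa using this
  -- the minimal sine value
  have hne : (Finset.Ioo 0 i0).Nonempty := ⟨1, Finset.mem_Ioo.2 ⟨Nat.zero_lt_one, hi0⟩⟩
  set S := (Finset.Ioo 0 i0).inf' hne (fun r => |Real.sin (Real.pi * r / i0)|) with hSdef
  have hS0 : 0 < S := by
    rw [hSdef, Finset.lt_inf'_iff]
    intro r hr
    rw [Finset.mem_Ioo] at hr
    have hr0 : (0:ℝ) < r := by exact_mod_cast hr.1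
    have hrl : (r:ℝ) < i0 := by exact_mod_cast hr.2
    have h1 : 0 < Real.sin (Real.pi * r / i0) := by
      apply Real.sin_pos_of_pos_of_lt_pi
      · positivity
      · rw [div_lt_iff₀ hi0R]
        nlinarith
    exact abs_pos.2 (ne_of_gt h1)
  have hsin : ∀ k : ℕ, 0 < k → ¬ i0 ∣ k → S ≤ |Real.sin ((k:ℝ) * Real.pi / Real.sqrt ν)| := by
    intro k hk hdvd
    have hnd : ¬ i0 ∣ k * j0 := fun h => hdvd (hcop.dvd_of_dvd_mul_right h)
    set r := (k * j0) % i0 with hrdef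
    set m := (k * j0) / i0 with hmdef
    have hr0 : 0 < r := Nat.pos_of_ne_zero (fun h => hnd (Nat.dvd_of_mod_eq_zero h))
    have hri : r < i0 := Nat.mod_lt _ (by omega)
    have hkj : ((k:ℝ)) * (j0:ℝ) = (i0:ℝ) * m + r := by
      have h := Nat.div_add_mod (k * j0) i0
      exact_mod_cast congrArg (fun n : ℕ => (n : ℝ)) h.symm
    have key : (k:ℝ) * Real.pi / Real.sqrt ν = Real.pi * r / i0 + m * Real.pi := by
      rw [hsν]
      field_simp
      nlinarith [hkj, Real.pi_pos]
    rw [key, Real.sin_add_nat_mul_pi, abs_mul, abs_pow, abs_neg, abs_one, one_pow, one_mul]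
    exact Finset.inf'_le _ (Finset.mem_Ioo.2 ⟨hr0, hri⟩)
  -- bounds on the two integrals
  have h1 : Real.sqrt (2/Real.pi) * Real.sqrt (Real.pi/2) = 1 := by
    rw [← Real.sqrt_mul (by positivity)]
    rw [show (2/Real.pi) * (Real.pi/2) = 1 by field_simp]
    exact Real.sqrt_one
  have hphi : ∀ (k : ℕ) (s : ℝ), |phi k s| ≤ Real.sqrt (2/Real.pi) := by
    intro k s
    rw [phi, abs_mul, abs_of_nonneg (Real.sqrt_nonneg _)]
    calc Real.sqrt (2/Real.pi) * |Real.sin (k*s)| ≤ Real.sqrt (2/Real.pi) * 1 := by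
          gcongr; exact Real.abs_sin_le_one _
      _ = _ := mul_one _
  have hIval : ∀ k : ℕ, |Ival ν q k| ≤ M * Real.pi := by
    intro k
    rw [Ival, ← Real.norm_eq_abs]
    have hb : ∀ᵐ s ∂(volume.restrict (Set.uIoc 0 Real.pi)),
        ‖q s * phi k s * Real.sqrt (Real.pi / 2) *
          Real.sin (((k : ℝ) / Real.sqrt ν) * (Real.pi - s))‖ ≤ M := by
      rw [Set.uIoc_of_le hπ.le]
      filter_upwards [hqae] with s hs
      rw [Real.norm_eq_abs, abs_mul, abs_mul, abs_mul,
        abs_of_nonneg (Real.sqrt_nonneg (Real.pi/2))]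
      calc |q s| * |phi k s| * Real.sqrt (Real.pi/2) * |Real.sin _|
          ≤ M * Real.sqrt (2/Real.pi) * Real.sqrt (Real.pi/2) * 1 := by
            gcongr <;> [skip; exact hphi k s; exact Real.abs_sin_le_one _]
            · rw [← Real.norm_eq_abs]; exact hs
        _ = M := by rw [mul_one, mul_assoc, h1, mul_one]
    calc ‖∫ s in (0:ℝ)..Real.pi, _‖ ≤ |∫ _ in (0:ℝ)..Real.pi, M| :=
          intervalIntegral.norm_integral_le_abs_of_norm_le hb (intervalIntegrable_const)
      _ = M * Real.pi := by
          rw [intervalIntegral.integral_const, smul_eq_mul, sub_zero,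
            abs_of_nonneg (by positivity), mul_comm]
  have hInt2 : ∀ (k : ℕ) (x : ℝ), x ∈ Set.Icc (0:ℝ) Real.pi →
      |∫ ξ in (0:ℝ)..x, Real.cos (((k : ℝ) / Real.sqrt ν) * (x - ξ)) * q ξ * phi k ξ|
        ≤ Real.pi * (M * Real.sqrt (2/Real.pi)) := by
    intro k x hx
    rw [← Real.norm_eq_abs]
    have hsub : Set.uIoc (0:ℝ) x ⊆ Set.Ioc 0 Real.pi := by
      rw [Set.uIoc_of_le hx.1]
      exact Set.Ioc_subset_Ioc_right hx.2
    have hb : ∀ᵐ ξ ∂(volume.restrict (Set.uIoc 0 x)),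
        ‖Real.cos (((k : ℝ) / Real.sqrt ν) * (x - ξ)) * q ξ * phi k ξ‖
          ≤ M * Real.sqrt (2/Real.pi) := by
      filter_upwards [ae_restrict_of_ae_restrict_of_subset hsub hqae] with ξ hξ
      rw [Real.norm_eq_abs, abs_mul, abs_mul]
      calc |Real.cos _| * |q ξ| * |phi k ξ| ≤ 1 * M * Real.sqrt (2/Real.pi) := by
            gcongr <;> [exact Real.abs_cos_le_one _; skip; exact hphi k ξ]
            · rw [← Real.norm_eq_abs]; exact hξ
        _ = M * Real.sqrt (2/Real.pi) := by ring
    calc ‖∫ ξ in (0:ℝ)..x, _‖ ≤ |∫ _ in (0:ℝ)..x, (M * Real.sqrt (2/Real.pi))| :=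
          intervalIntegral.norm_integral_le_abs_of_norm_le hb (intervalIntegrable_const)
      _ = x * (M * Real.sqrt (2/Real.pi)) := by
          rw [intervalIntegral.integral_const, smul_eq_mul, sub_zero,
            abs_of_nonneg (mul_nonneg hx.1 (by positivity))]
      _ ≤ Real.pi * (M * Real.sqrt (2/Real.pi)) := by
          gcongr; exact hx.2
  -- assemble the constant
  refine ⟨M * Real.pi / (ν * Real.sqrt (Real.pi/2) * S)
      + (1/ν) * (Real.pi * (M * Real.sqrt (2/Real.pi))) + 1, by positivity, ?_⟩
  intro k hk hdvd x hx
  have hsk := hsin k hk hdvd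
  rw [psiTilde']
  have hden : (0:ℝ) < ν * Real.sqrt (Real.pi/2) * S := by positivity
  have term1 : |(-(Ival ν q k / (ν * Real.sqrt (Real.pi / 2) *
        Real.sin ((k : ℝ) * Real.pi / Real.sqrt ν)))) *
        Real.cos ((k : ℝ) * x / Real.sqrt ν)|
      ≤ M * Real.pi / (ν * Real.sqrt (Real.pi/2) * S) := by
    rw [abs_mul, abs_neg, abs_div]
    have hd : ν * Real.sqrt (Real.pi/2) * S
        ≤ |ν * Real.sqrt (Real.pi/2) * Real.sin ((k:ℝ) * Real.pi / Real.sqrt ν)| := by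
      rw [abs_mul, abs_mul, abs_of_nonneg hνpos.le, abs_of_nonneg (Real.sqrt_nonneg _)]
      gcongr
    have h2 : |Ival ν q k| / |ν * Real.sqrt (Real.pi/2) *
          Real.sin ((k:ℝ) * Real.pi / Real.sqrt ν)|
        ≤ M * Real.pi / (ν * Real.sqrt (Real.pi/2) * S) :=
      div_le_div₀ (by positivity) (hIval k) hden hd
    calc |Ival ν q k| / |ν * Real.sqrt (Real.pi/2) *
          Real.sin ((k:ℝ) * Real.pi / Real.sqrt ν)| * |Real.cos ((k : ℝ) * x / Real.sqrt ν)|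
        ≤ M * Real.pi / (ν * Real.sqrt (Real.pi/2) * S) * 1 :=
          mul_le_mul h2 (Real.abs_cos_le_one _) (abs_nonneg _) (by positivity)
      _ = M * Real.pi / (ν * Real.sqrt (Real.pi/2) * S) := mul_one _
  have term2 : |(1/ν) * ∫ ξ in (0:ℝ)..x,
        Real.cos (((k : ℝ) / Real.sqrt ν) * (x - ξ)) * q ξ * phi k ξ|
      ≤ (1/ν) * (Real.pi * (M * Real.sqrt (2/Real.pi))) := by
    rw [abs_mul, abs_of_nonneg (by positivity : (0:ℝ) ≤ 1/ν)]
    gcongr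
    exact hInt2 k x hx
  calc |_ + _| ≤ |_| + |_| := abs_add_le _ _
    _ ≤ M * Real.pi / (ν * Real.sqrt (Real.pi/2) * S)
        + (1/ν) * (Real.pi * (M * Real.sqrt (2/Real.pi))) := add_le_add term1 term2
    _ ≤ _ := by linarith
end

section
/- Let i₀ and j₀ be coprime positive integers, set ν = i₀²/j₀², and let q ∈ L^∞(0,π). For each positive integer l, define I(i₀²l²) = ∫₀^π q(s)·φ_{i₀l}(s)·φ_{j₀l}(s) ds, the function β_l(x) = −(1/(ν·j₀·l))·∫₀ˣ sin(j₀·l·(x − ξ))·(I(i₀²l²)·φ_{j₀l}(ξ) − q(ξ)·φ_{i₀l}(ξ)) dξ, the number α_l = (1/(ν·j₀·l))·∫₀^π (∫₀ˣ sin(j₀·l·(x − ξ))·(I(i₀²l²)·φ_{j₀l}(ξ) − q(ξ)·φ_{i₀l}(ξ)) dξ)·φ_{j₀l}(x) dx, and the function ψ̂_l = α_l·φ_{j₀l} + β_l. Then there exists a constant C > 0 such that for every positive integer l, |α_l| ≤ C and sup_{x∈[0,π]} |ψ̂_l'(x)| ≤ C, where ψ̂_l' denotes the derivative of ψ̂_l.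 -/
open MeasureTheory

/-- `I(i₀²l²) = ∫₀^π q(s)·φ_{i₀l}(s)·φ_{j₀l}(s) ds`. -/
noncomputable def Iquad (q : ℝ → ℝ) (i0 j0 l : ℕ) : ℝ :=
  ∫ s in (0 : ℝ)..Real.pi, q s * phi (i0 * l) s * phi (j0 * l) s

/-- `β_l(x) = -(1/(ν j₀ l)) ∫₀ˣ sin(j₀l(x-ξ))·(I(i₀²l²) φ_{j₀l}(ξ) - q(ξ) φ_{i₀l}(ξ)) dξ`. -/
noncomputable def betaF (ν : ℝ) (q : ℝ → ℝ) (i0 j0 l : ℕ) (x : ℝ) : ℝ :=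
  -(1 / (ν * (j0 : ℝ) * (l : ℝ))) *
    ∫ ξ in (0 : ℝ)..x, Real.sin ((j0 : ℝ) * (l : ℝ) * (x - ξ)) *
      (Iquad q i0 j0 l * phi (j0 * l) ξ - q ξ * phi (i0 * l) ξ)

/-- `α_l = (1/(ν j₀ l)) ∫₀^π (∫₀ˣ sin(j₀l(x-ξ))·(I φ_{j₀l} - q φ_{i₀l})(ξ) dξ)·φ_{j₀l}(x) dx`. -/
noncomputable def alphaC (ν : ℝ) (q : ℝ → ℝ) (i0 j0 l : ℕ) : ℝ :=
  (1 / (ν * (j0 : ℝ) * (l : ℝ))) *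
    ∫ x in (0 : ℝ)..Real.pi,
      (∫ ξ in (0 : ℝ)..x, Real.sin ((j0 : ℝ) * (l : ℝ) * (x - ξ)) *
        (Iquad q i0 j0 l * phi (j0 * l) ξ - q ξ * phi (i0 * l) ξ)) * phi (j0 * l) x

/-- `ψ̂_l = α_l·φ_{j₀l} + β_l`. -/
noncomputable def psiHat (ν : ℝ) (q : ℝ → ℝ) (i0 j0 l : ℕ) (x : ℝ) : ℝ :=
  alphaC ν q i0 j0 l * phi (j0 * l) x + betaF ν q i0 j0 l x

open Set Filter

lemma phi_abs_le' (n : ℕ) (x : ℝ) :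
    |Real.sqrt (2 / Real.pi) * Real.sin ((n : ℝ) * x)| ≤ 1 := by
  rw [abs_mul, abs_of_nonneg (Real.sqrt_nonneg _)]
  have h1 : Real.sqrt (2 / Real.pi) ≤ 1 := by
    rw [show (1:ℝ) = Real.sqrt 1 by simp]
    exact Real.sqrt_le_sqrt (by
      rw [div_le_one Real.pi_pos]
      exact Real.two_le_pi)
  have h2 : |Real.sin ((n:ℝ)*x)| ≤ 1 := Real.abs_sin_le_one _
  calc Real.sqrt (2/Real.pi) * |Real.sin ((n:ℝ)*x)| ≤ 1 * 1 :=
      mul_le_mul h1 h2 (abs_nonneg _) zero_le_one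
    _ = 1 := by ring

lemma key_est' (g : ℝ → ℝ) {G : ℝ} (hG : 0 ≤ G)
    (hgm : AEStronglyMeasurable g (volume.restrict (Set.Ioc 0 Real.pi)))
    (hgb : ∀ᵐ s ∂(volume.restrict (Set.Ioc (0:ℝ) Real.pi)), |g s| ≤ G)
    (F : ℝ → ℝ) {B : ℝ} (hF : Continuous F) (hFb : ∀ t, |F t| ≤ B)
    {u v : ℝ} (hu : 0 ≤ u) (huv : u ≤ v) (hv : v ≤ Real.pi) :
    IntervalIntegrable (fun ξ => F ξ * g ξ) volume u v ∧
      |∫ ξ in u..v, F ξ * g ξ| ≤ B * G * (v - u) := by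
  have hB : 0 ≤ B := le_trans (abs_nonneg _) (hFb 0)
  have hsub : Set.Ioc u v ⊆ Set.Ioc 0 Real.pi := Set.Ioc_subset_Ioc hu hv
  have hgm' : AEStronglyMeasurable g (volume.restrict (Set.Ioc u v)) :=
    hgm.mono_measure (Measure.restrict_mono hsub le_rfl)
  have hgb' : ∀ᵐ s ∂(volume.restrict (Set.Ioc u v)), |g s| ≤ G :=
    ae_restrict_of_ae_restrict_of_subset hsub hgb
  have hm : AEStronglyMeasurable (fun ξ => F ξ * g ξ) (volume.restrict (Set.Ioc u v)) :=
    hF.aestronglyMeasurable.mul hgm'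
  have hbd : ∀ᵐ s ∂(volume.restrict (Set.Ioc u v)), ‖F s * g s‖ ≤ B * G := by
    filter_upwards [hgb'] with s hs
    rw [Real.norm_eq_abs, abs_mul]
    exact mul_le_mul (hFb s) hs (abs_nonneg _) hB
  have hint : IntegrableOn (fun ξ => F ξ * g ξ) (Set.Ioc u v) volume :=
    Integrable.mono' (show IntegrableOn (fun _ => B * G) (Set.Ioc u v) volume from integrableOn_const measure_Ioc_lt_top.ne) hm hbd
  constructor
  · exact (intervalIntegrable_iff_integrableOn_Ioc_of_le huv).2 hint
  · rw [← Real.norm_eq_abs, intervalIntegral.integral_of_le huv]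
    have h := norm_setIntegral_le_of_norm_le_const_ae (μ := volume) (s := Set.Ioc u v)
      measure_Ioc_lt_top hbd
    simpa [Real.volume_Ioc, ENNReal.toReal_ofReal (sub_nonneg.2 huv), max_eq_left (sub_nonneg.2 huv)] using h

lemma abs_deriv_le_of_lip' {f : ℝ → ℝ} {L : ℝ} (hL : 0 ≤ L)
    (hf : ∀ x ∈ Set.Icc (0:ℝ) Real.pi, ∀ y ∈ Set.Icc (0:ℝ) Real.pi, |f x - f y| ≤ L * |x - y|)
    {x : ℝ} (hx : x ∈ Set.Icc (0:ℝ) Real.pi) : |deriv f x| ≤ L := by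
  by_cases hd : DifferentiableAt ℝ f x
  · have h1 : HasDerivWithinAt f (deriv f x) (Set.Icc 0 Real.pi) x :=
      hd.hasDerivAt.hasDerivWithinAt
    rw [hasDerivWithinAt_iff_tendsto_slope] at h1
    have hne : (nhdsWithin x (Set.Icc (0:ℝ) Real.pi \ {x})).NeBot := by
      rw [← mem_closure_iff_nhdsWithin_neBot]
      rcases lt_or_eq_of_le hx.2 with h | h
      · have hsub : Set.Ioo x Real.pi ⊆ Set.Icc (0:ℝ) Real.pi \ {x} := fun t ht =>
          ⟨⟨le_trans hx.1 ht.1.le, ht.2.le⟩, fun heq => (ne_of_lt ht.1) (by simpa using heq.symm)⟩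
        refine closure_mono hsub ?_
        rw [closure_Ioo h.ne]
        exact ⟨le_rfl, h.le⟩
      · have hsub : Set.Ioo (0:ℝ) Real.pi ⊆ Set.Icc (0:ℝ) Real.pi \ {x} := fun t ht =>
          ⟨⟨ht.1.le, ht.2.le⟩, fun heq => by rw [heq, h] at ht; exact lt_irrefl _ ht.2⟩
        refine closure_mono hsub ?_
        rw [closure_Ioo Real.pi_pos.ne]
        rw [h]; exact ⟨Real.pi_pos.le, le_rfl⟩
    have h2 : Filter.Tendsto (fun y => |slope f x y|)
        (nhdsWithin x (Set.Icc (0:ℝ) Real.pi \ {x})) (nhds |deriv f x|) := h1.abs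
    refine le_of_tendsto h2 ?_
    filter_upwards [self_mem_nhdsWithin] with y hy
    obtain ⟨hy1, hy2⟩ := hy
    have hne' : y - x ≠ 0 := sub_ne_zero.2 (by simpa using hy2)
    rw [slope_def_field, div_eq_mul_inv, abs_mul, abs_inv, ← div_eq_mul_inv]
    rw [div_le_iff₀ (abs_pos.2 hne')]
    have := hf y hy1 x hx
    calc |f y - f x| ≤ L * |y - x| := this
      _ = L * |y - x| := rfl
  · simp [deriv_zero_of_not_differentiableAt hd, hL]

lemma phi_abs_le (n : ℕ) (x : ℝ) : |phi n x| ≤ 1 := by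
  unfold phi
  rw [abs_mul, abs_of_nonneg (Real.sqrt_nonneg _)]
  have h1 : Real.sqrt (2 / Real.pi) ≤ 1 := by
    rw [show (1:ℝ) = Real.sqrt 1 by simp]
    exact Real.sqrt_le_sqrt (by rw [div_le_one Real.pi_pos]; exact Real.two_le_pi)
  have h2 : |Real.sin ((n:ℝ)*x)| ≤ 1 := Real.abs_sin_le_one _
  calc Real.sqrt (2/Real.pi) * |Real.sin ((n:ℝ)*x)| ≤ 1 * 1 :=
      mul_le_mul h1 h2 (abs_nonneg _) zero_le_one
    _ = 1 := by ring

lemma phi_continuous (n : ℕ) : Continuous (phi n) := by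
  unfold phi; fun_prop

lemma abs_sin_sub_sin (u v : ℝ) : |Real.sin u - Real.sin v| ≤ |u - v| := by
  rw [Real.sin_sub_sin, abs_mul, abs_mul]
  have h1 : |Real.sin ((u-v)/2)| ≤ |u - v| / 2 := by
    have := Real.abs_sin_le_abs (x := (u-v)/2)
    rwa [abs_div, abs_two] at this
  have h2 := Real.abs_cos_le_one ((u+v)/2)
  have h3 : |(2:ℝ)| = 2 := by norm_num
  rw [h3]
  nlinarith [abs_nonneg (Real.sin ((u-v)/2)), abs_nonneg (Real.cos ((u+v)/2)), abs_nonneg (u-v)]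

lemma phi_lip (n : ℕ) (x y : ℝ) : |phi n x - phi n y| ≤ (n:ℝ) * |x - y| := by
  unfold phi
  rw [← mul_sub, abs_mul, abs_of_nonneg (Real.sqrt_nonneg _)]
  have h1 : Real.sqrt (2 / Real.pi) ≤ 1 := by
    rw [show (1:ℝ) = Real.sqrt 1 by simp]
    exact Real.sqrt_le_sqrt (by rw [div_le_one Real.pi_pos]; exact Real.two_le_pi)
  have h2 : |Real.sin ((n:ℝ)*x) - Real.sin ((n:ℝ)*y)| ≤ |(n:ℝ)*x - (n:ℝ)*y| :=
    abs_sin_sub_sin _ _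
  calc Real.sqrt (2/Real.pi) * |Real.sin ((n:ℝ)*x) - Real.sin ((n:ℝ)*y)|
      ≤ 1 * |(n:ℝ)*x - (n:ℝ)*y| := mul_le_mul h1 h2 (abs_nonneg _) zero_le_one
    _ = (n:ℝ) * |x - y| := by rw [one_mul, ← mul_sub, abs_mul, Nat.abs_cast]

set_option maxHeartbeats 1000000 in
/-- the numbers `α_l` and the derivatives `ψ̂_l'` are uniformly bounded. -/
theorem stmt_13 (i0 j0 : ℕ) (hi0 : 0 < i0) (hj0 : 0 < j0) (hcop : Nat.Coprime i0 j0)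
    (ν : ℝ) (hν : ν = (i0 : ℝ) ^ 2 / (j0 : ℝ) ^ 2)
    (q : ℝ → ℝ) (hq : MemLp q ⊤ (volume.restrict (Set.Ioo 0 Real.pi))) :
    ∃ C : ℝ, 0 < C ∧ ∀ l : ℕ, 1 ≤ l →
      |alphaC ν q i0 j0 l| ≤ C ∧
      ∀ x ∈ Set.Icc (0 : ℝ) Real.pi, |deriv (psiHat ν q i0 j0 l) x| ≤ C := by
  have hπ := Real.pi_pos
  have hi : (0:ℝ) < i0 := by exact_mod_cast hi0
  have hj : (0:ℝ) < j0 := by exact_mod_cast hj0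
  have hν0 : 0 < ν := by rw [hν]; positivity
  have hre : volume.restrict (Set.Ioo (0:ℝ) Real.pi) = volume.restrict (Set.Ioc 0 Real.pi) :=
    Measure.restrict_congr_set Ioo_ae_eq_Ioc
  set M := (eLpNormEssSup q (volume.restrict (Set.Ioo (0:ℝ) Real.pi))).toReal with hMdef
  have hM : 0 ≤ M := ENNReal.toReal_nonneg
  have hqm : AEStronglyMeasurable q (volume.restrict (Set.Ioc (0:ℝ) Real.pi)) := hre ▸ hq.1
  have hqb : ∀ᵐ s ∂(volume.restrict (Set.Ioc (0:ℝ) Real.pi)), |q s| ≤ M := by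
    rw [← hre]
    have hfin : eLpNormEssSup q (volume.restrict (Set.Ioo (0:ℝ) Real.pi)) ≠ ⊤ := by
      have h2 := hq.2
      rwa [eLpNorm_exponent_top, lt_top_iff_ne_top] at h2
    filter_upwards [ae_le_eLpNormEssSup
      (f := q) (μ := volume.restrict (Set.Ioo (0:ℝ) Real.pi))] with s hs
    have h2 := ENNReal.toReal_mono hfin hs
    simpa [hMdef] using h2
  set G := M * Real.pi + M with hGdef
  have hG : 0 ≤ G := by positivity
  refine ⟨(G * Real.pi * Real.pi + G * Real.pi + G) / ν + 1, by positivity, ?_⟩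
  intro l hl
  have hl1 : (1:ℝ) ≤ l := by exact_mod_cast hl
  have hlp : (0:ℝ) < l := by linarith
  have hj1 : (1:ℝ) ≤ j0 := by exact_mod_cast hj0
  have ha1 : 1 ≤ (j0:ℝ) * l := by nlinarith
  have ha0 : (0:ℝ) < (j0:ℝ) * l := by linarith
  set c := 1 / (ν * (j0:ℝ) * (l:ℝ)) with hcdef
  have hc0 : 0 < c := by rw [hcdef]; positivity
  have hca : c * ((j0:ℝ) * l) = 1 / ν := by rw [hcdef]; field_simp
  have hcν : c ≤ 1 / ν := by
    rw [hcdef, div_le_div_iff₀ (by positivity) hν0]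
    nlinarith
  -- bound on Iquad
  have hIb : |Iquad q i0 j0 l| ≤ M * Real.pi := by
    have hFb : ∀ t, |phi (i0*l) t * phi (j0*l) t| ≤ 1 := by
      intro t; rw [abs_mul]
      exact mul_le_one₀ (phi_abs_le _ _) (abs_nonneg _) (phi_abs_le _ _)
    have h : |∫ s in (0:ℝ)..Real.pi, (phi (i0*l) s * phi (j0*l) s) * q s|
        ≤ 1 * M * (Real.pi - 0) :=
      (key_est' q hM hqm hqb (fun s => phi (i0*l) s * phi (j0*l) s)
        ((phi_continuous _).mul (phi_continuous _)) hFb le_rfl hπ.le le_rfl).2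
    have heq : Iquad q i0 j0 l
        = ∫ s in (0:ℝ)..Real.pi, (phi (i0*l) s * phi (j0*l) s) * q s := by
      unfold Iquad
      apply intervalIntegral.integral_congr; intro s _; ring
    rw [heq]
    calc |∫ s in (0:ℝ)..Real.pi, (phi (i0*l) s * phi (j0*l) s) * q s|
        ≤ 1 * M * (Real.pi - 0) := h
      _ = M * Real.pi := by ring
  -- the function g
  have hgm : AEStronglyMeasurable
      (fun ξ => Iquad q i0 j0 l * phi (j0*l) ξ - q ξ * phi (i0*l) ξ)
      (volume.restrict (Set.Ioc (0:ℝ) Real.pi)) :=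
    ((continuous_const.mul (phi_continuous (j0*l))).aestronglyMeasurable).sub
      (hqm.mul (phi_continuous (i0*l)).aestronglyMeasurable)
  have hgb : ∀ᵐ s ∂(volume.restrict (Set.Ioc (0:ℝ) Real.pi)),
      |Iquad q i0 j0 l * phi (j0*l) s - q s * phi (i0*l) s| ≤ G := by
    filter_upwards [hqb] with s hs
    calc |Iquad q i0 j0 l * phi (j0*l) s - q s * phi (i0*l) s|
        ≤ |Iquad q i0 j0 l * phi (j0*l) s| + |q s * phi (i0*l) s| := abs_sub _ _
      _ ≤ (M * Real.pi) * 1 + M * 1 := by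
          rw [abs_mul, abs_mul]
          exact add_le_add
            (mul_le_mul hIb (phi_abs_le _ _) (abs_nonneg _) (by positivity))
            (mul_le_mul hs (phi_abs_le _ _) (abs_nonneg _) hM)
      _ = G := by rw [hGdef]; ring
  -- inner integral: integrability and bound
  have hinner : ∀ x ∈ Set.Icc (0:ℝ) Real.pi,
      IntervalIntegrable (fun ξ => Real.sin ((j0:ℝ)*(l:ℝ)*(x-ξ)) *
        (Iquad q i0 j0 l * phi (j0*l) ξ - q ξ * phi (i0*l) ξ)) volume 0 x ∧
      |∫ ξ in (0:ℝ)..x, Real.sin ((j0:ℝ)*(l:ℝ)*(x-ξ)) *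
        (Iquad q i0 j0 l * phi (j0*l) ξ - q ξ * phi (i0*l) ξ)| ≤ G * Real.pi := by
    intro x hx
    have h := key_est' (fun ξ => Iquad q i0 j0 l * phi (j0*l) ξ - q ξ * phi (i0*l) ξ)
      hG hgm hgb (fun ξ => Real.sin ((j0:ℝ)*(l:ℝ)*(x-ξ))) (B := 1)
      (by fun_prop) (fun t => Real.abs_sin_le_one _) le_rfl hx.1 hx.2
    refine ⟨h.1, le_trans h.2 ?_⟩
    nlinarith [hx.2, hx.1, hG]
  -- bound on alphaC
  have hαb : |alphaC ν q i0 j0 l| ≤ c * (G * Real.pi * Real.pi) := by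
    unfold alphaC
    rw [abs_mul]
    have h1 : |1 / (ν * (j0:ℝ) * (l:ℝ))| = c := by
      rw [hcdef]; exact abs_of_pos (hcdef ▸ hc0)
    rw [h1]
    refine mul_le_mul_of_nonneg_left ?_ hc0.le
    have h2 := intervalIntegral.norm_integral_le_of_norm_le_const (C := G * Real.pi)
      (f := fun x => (∫ ξ in (0:ℝ)..x, Real.sin ((j0:ℝ)*(l:ℝ)*(x-ξ)) *
        (Iquad q i0 j0 l * phi (j0*l) ξ - q ξ * phi (i0*l) ξ)) * phi (j0*l) x)
      (a := (0:ℝ)) (b := Real.pi) ?_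
    · rw [Real.norm_eq_abs] at h2
      calc |∫ x in (0:ℝ)..Real.pi, (∫ ξ in (0:ℝ)..x, Real.sin ((j0:ℝ)*(l:ℝ)*(x-ξ)) *
            (Iquad q i0 j0 l * phi (j0*l) ξ - q ξ * phi (i0*l) ξ)) * phi (j0*l) x|
          ≤ G * Real.pi * |Real.pi - 0| := h2
        _ = G * Real.pi * Real.pi := by rw [sub_zero, abs_of_pos hπ]
    · intro t ht
      rw [Set.uIoc_of_le hπ.le] at ht
      have h3 := (hinner t ⟨ht.1.le, ht.2⟩).2
      rw [Real.norm_eq_abs, abs_mul]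
      calc |∫ ξ in (0:ℝ)..t, Real.sin ((j0:ℝ)*(l:ℝ)*(t-ξ)) *
            (Iquad q i0 j0 l * phi (j0*l) ξ - q ξ * phi (i0*l) ξ)| * |phi (j0*l) t|
          ≤ (G * Real.pi) * 1 :=
            mul_le_mul h3 (phi_abs_le _ _) (abs_nonneg _) (by positivity)
        _ = G * Real.pi := by ring
  -- Lipschitz bound for betaF (ordered version)
  have hblip : ∀ x ∈ Set.Icc (0:ℝ) Real.pi, ∀ y ∈ Set.Icc (0:ℝ) Real.pi, y ≤ x →
      |betaF ν q i0 j0 l x - betaF ν q i0 j0 l y|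
        ≤ (G * Real.pi / ν + G / ν) * (x - y) := by
    intro x hx y hy hyx
    have hA : IntervalIntegrable (fun ξ => Real.sin ((j0:ℝ)*(l:ℝ)*(x-ξ)) *
        (Iquad q i0 j0 l * phi (j0*l) ξ - q ξ * phi (i0*l) ξ)) volume 0 y :=
      (key_est' (fun ξ => Iquad q i0 j0 l * phi (j0*l) ξ - q ξ * phi (i0*l) ξ)
        hG hgm hgb (fun ξ => Real.sin ((j0:ℝ)*(l:ℝ)*(x-ξ))) (B := 1)
        (by fun_prop) (fun t => Real.abs_sin_le_one _) le_rfl hy.1 hy.2).1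
    have hD : IntervalIntegrable (fun ξ => Real.sin ((j0:ℝ)*(l:ℝ)*(y-ξ)) *
        (Iquad q i0 j0 l * phi (j0*l) ξ - q ξ * phi (i0*l) ξ)) volume 0 y :=
      (key_est' (fun ξ => Iquad q i0 j0 l * phi (j0*l) ξ - q ξ * phi (i0*l) ξ)
        hG hgm hgb (fun ξ => Real.sin ((j0:ℝ)*(l:ℝ)*(y-ξ))) (B := 1)
        (by fun_prop) (fun t => Real.abs_sin_le_one _) le_rfl hy.1 hy.2).1
    have hB2 := key_est' (fun ξ => Iquad q i0 j0 l * phi (j0*l) ξ - q ξ * phi (i0*l) ξ)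
        hG hgm hgb (fun ξ => Real.sin ((j0:ℝ)*(l:ℝ)*(x-ξ))) (B := 1)
        (by fun_prop) (fun t => Real.abs_sin_le_one _) hy.1 hyx hx.2
    have hEbd : ∀ t : ℝ, |Real.sin ((j0:ℝ)*(l:ℝ)*(x-t)) - Real.sin ((j0:ℝ)*(l:ℝ)*(y-t))|
        ≤ (j0:ℝ)*(l:ℝ)*(x-y) := by
      intro t
      calc |Real.sin ((j0:ℝ)*(l:ℝ)*(x-t)) - Real.sin ((j0:ℝ)*(l:ℝ)*(y-t))|
          ≤ |(j0:ℝ)*(l:ℝ)*(x-t) - (j0:ℝ)*(l:ℝ)*(y-t)| := abs_sin_sub_sin _ _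
        _ = |(j0:ℝ)*(l:ℝ)*(x-y)| := by ring_nf
        _ = (j0:ℝ)*(l:ℝ)*(x-y) := abs_of_nonneg (by nlinarith)
    have hE := key_est' (fun ξ => Iquad q i0 j0 l * phi (j0*l) ξ - q ξ * phi (i0*l) ξ)
        hG hgm hgb (fun ξ => Real.sin ((j0:ℝ)*(l:ℝ)*(x-ξ)) - Real.sin ((j0:ℝ)*(l:ℝ)*(y-ξ)))
        (B := (j0:ℝ)*(l:ℝ)*(x-y)) (by fun_prop) hEbd le_rfl hy.1 hy.2
    have hsplit : (∫ ξ in (0:ℝ)..x, Real.sin ((j0:ℝ)*(l:ℝ)*(x-ξ)) *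
          (Iquad q i0 j0 l * phi (j0*l) ξ - q ξ * phi (i0*l) ξ))
        = (∫ ξ in (0:ℝ)..y, Real.sin ((j0:ℝ)*(l:ℝ)*(x-ξ)) *
            (Iquad q i0 j0 l * phi (j0*l) ξ - q ξ * phi (i0*l) ξ))
          + ∫ ξ in y..x, Real.sin ((j0:ℝ)*(l:ℝ)*(x-ξ)) *
            (Iquad q i0 j0 l * phi (j0*l) ξ - q ξ * phi (i0*l) ξ) :=
      (intervalIntegral.integral_add_adjacent_intervals hA hB2.1).symm
    have hsub : (∫ ξ in (0:ℝ)..y, Real.sin ((j0:ℝ)*(l:ℝ)*(x-ξ)) *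
          (Iquad q i0 j0 l * phi (j0*l) ξ - q ξ * phi (i0*l) ξ))
        - (∫ ξ in (0:ℝ)..y, Real.sin ((j0:ℝ)*(l:ℝ)*(y-ξ)) *
          (Iquad q i0 j0 l * phi (j0*l) ξ - q ξ * phi (i0*l) ξ))
        = ∫ ξ in (0:ℝ)..y, (Real.sin ((j0:ℝ)*(l:ℝ)*(x-ξ)) - Real.sin ((j0:ℝ)*(l:ℝ)*(y-ξ))) *
          (Iquad q i0 j0 l * phi (j0*l) ξ - q ξ * phi (i0*l) ξ) := by
      rw [← intervalIntegral.integral_sub hA hD]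
      apply intervalIntegral.integral_congr; intro ξ _; ring
    have hdiff : betaF ν q i0 j0 l x - betaF ν q i0 j0 l y
        = -(1/(ν*(j0:ℝ)*(l:ℝ))) *
          ((∫ ξ in (0:ℝ)..y, (Real.sin ((j0:ℝ)*(l:ℝ)*(x-ξ)) - Real.sin ((j0:ℝ)*(l:ℝ)*(y-ξ))) *
            (Iquad q i0 j0 l * phi (j0*l) ξ - q ξ * phi (i0*l) ξ))
          + ∫ ξ in y..x, Real.sin ((j0:ℝ)*(l:ℝ)*(x-ξ)) *
            (Iquad q i0 j0 l * phi (j0*l) ξ - q ξ * phi (i0*l) ξ)) := by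
      unfold betaF
      rw [hsplit, ← hsub]
      ring
    have habs : |(-(1/(ν*(j0:ℝ)*(l:ℝ))))| = c := by
      rw [abs_neg, hcdef]; exact abs_of_pos (hcdef ▸ hc0)
    rw [hdiff, abs_mul, habs]
    calc c * |(∫ ξ in (0:ℝ)..y, (Real.sin ((j0:ℝ)*(l:ℝ)*(x-ξ)) - Real.sin ((j0:ℝ)*(l:ℝ)*(y-ξ))) *
            (Iquad q i0 j0 l * phi (j0*l) ξ - q ξ * phi (i0*l) ξ))
          + ∫ ξ in y..x, Real.sin ((j0:ℝ)*(l:ℝ)*(x-ξ)) *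
            (Iquad q i0 j0 l * phi (j0*l) ξ - q ξ * phi (i0*l) ξ)|
        ≤ c * ((j0:ℝ)*(l:ℝ)*(x-y) * G * (y - 0) + 1 * G * (x - y)) := by
          refine mul_le_mul_of_nonneg_left ?_ hc0.le
          exact le_trans (abs_add_le _ _) (add_le_add hE.2 hB2.2)
      _ = (c * ((j0:ℝ)*(l:ℝ))) * G * y * (x-y) + c * G * (x-y) := by ring
      _ ≤ (1/ν) * G * Real.pi * (x-y) + (1/ν) * G * (x-y) := by
          rw [hca]
          have h2 : (1/ν) * G * y * (x-y) ≤ (1/ν) * G * Real.pi * (x-y) := by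
            nlinarith [mul_nonneg (mul_nonneg (mul_nonneg (le_of_lt (by positivity : (0:ℝ) < 1/ν)) hG) (sub_nonneg.2 hy.2)) (sub_nonneg.2 hyx)]
          have h3 : c * G * (x-y) ≤ (1/ν) * G * (x-y) := by
            nlinarith [mul_nonneg (mul_nonneg (sub_nonneg.2 hcν) hG) (sub_nonneg.2 hyx)]
          linarith
      _ = (G * Real.pi / ν + G / ν) * (x - y) := by ring
  -- Lipschitz bound for psiHat
  have hplip : ∀ x ∈ Set.Icc (0:ℝ) Real.pi, ∀ y ∈ Set.Icc (0:ℝ) Real.pi,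
      |psiHat ν q i0 j0 l x - psiHat ν q i0 j0 l y|
        ≤ (G * Real.pi * Real.pi / ν + G * Real.pi / ν + G / ν) * |x - y| := by
    have hord : ∀ x ∈ Set.Icc (0:ℝ) Real.pi, ∀ y ∈ Set.Icc (0:ℝ) Real.pi, y ≤ x →
        |psiHat ν q i0 j0 l x - psiHat ν q i0 j0 l y|
          ≤ (G * Real.pi * Real.pi / ν + G * Real.pi / ν + G / ν) * |x - y| := by
      intro x hx y hy hyx
      have h1 : psiHat ν q i0 j0 l x - psiHat ν q i0 j0 l y
          = alphaC ν q i0 j0 l * (phi (j0*l) x - phi (j0*l) y)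
            + (betaF ν q i0 j0 l x - betaF ν q i0 j0 l y) := by
        unfold psiHat; ring
      have h2 : |alphaC ν q i0 j0 l * (phi (j0*l) x - phi (j0*l) y)|
          ≤ (G * Real.pi * Real.pi / ν) * (x - y) := by
        rw [abs_mul]
        have hppl : |phi (j0*l) x - phi (j0*l) y| ≤ (j0:ℝ)*(l:ℝ) * (x - y) := by
          have := phi_lip (j0*l) x y
          rw [abs_of_nonneg (sub_nonneg.2 hyx)] at this
          calc |phi (j0*l) x - phi (j0*l) y| ≤ ((j0*l : ℕ):ℝ) * (x - y) := this
            _ = (j0:ℝ)*(l:ℝ) * (x - y) := by push_cast; ring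
        calc |alphaC ν q i0 j0 l| * |phi (j0*l) x - phi (j0*l) y|
            ≤ (c * (G * Real.pi * Real.pi)) * ((j0:ℝ)*(l:ℝ) * (x - y)) :=
              mul_le_mul hαb hppl (abs_nonneg _) (by positivity)
          _ = (c * ((j0:ℝ)*(l:ℝ))) * (G * Real.pi * Real.pi) * (x - y) := by ring
          _ = (G * Real.pi * Real.pi / ν) * (x - y) := by rw [hca]; ring
      have h3 := hblip x hx y hy hyx
      rw [abs_of_nonneg (sub_nonneg.2 hyx)]
      calc |psiHat ν q i0 j0 l x - psiHat ν q i0 j0 l y|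
          ≤ |alphaC ν q i0 j0 l * (phi (j0*l) x - phi (j0*l) y)|
            + |betaF ν q i0 j0 l x - betaF ν q i0 j0 l y| := by
            rw [h1]; exact abs_add_le _ _
        _ ≤ (G * Real.pi * Real.pi / ν) * (x - y) + (G * Real.pi / ν + G / ν) * (x - y) :=
            add_le_add h2 h3
        _ = (G * Real.pi * Real.pi / ν + G * Real.pi / ν + G / ν) * (x - y) := by ring
    intro x hx y hy
    rcases le_total y x with h | h
    · exact hord x hx y hy h
    · rw [abs_sub_comm, abs_sub_comm x y]
      exact hord y hy x hx h
  constructor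
  · calc |alphaC ν q i0 j0 l| ≤ c * (G * Real.pi * Real.pi) := hαb
      _ ≤ (1/ν) * (G * Real.pi * Real.pi) := by
          nlinarith [mul_nonneg (sub_nonneg.2 hcν) (by positivity : (0:ℝ) ≤ G * Real.pi * Real.pi)]
      _ ≤ (G * Real.pi * Real.pi + G * Real.pi + G) / ν + 1 := by
          have h1 : 0 ≤ G * Real.pi / ν := by positivity
          have h2 : 0 ≤ G / ν := by positivity
          have h3 : (1/ν) * (G * Real.pi * Real.pi) = G * Real.pi * Real.pi / ν := by ring
          have h4 : (G * Real.pi * Real.pi + G * Real.pi + G) / ν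
              = G * Real.pi * Real.pi / ν + G * Real.pi / ν + G / ν := by ring
          linarith
  · intro x hx
    refine abs_deriv_le_of_lip' (by positivity) ?_ hx
    intro u hu v hv
    refine le_trans (hplip u hu v hv) (mul_le_mul_of_nonneg_right ?_ (abs_nonneg _))
    have h4 : (G * Real.pi * Real.pi + G * Real.pi + G) / ν
        = G * Real.pi * Real.pi / ν + G * Real.pi / ν + G / ν := by ring
    linarith
end
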